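/- Let G be a finite simple graph with clique vertex partition π and G^π the associated clique-whiskered graph, with vertices ordered by w_{11} > w_{12} > … > w_{1r_1} > v_1 > w_{21} > … > v_{t−1} > w_{t1} > … > w_{t r_t} > v_t. Then for every minimal vertex cover C of G^π, the colon ideal ⟨X_{C'} : C' a minimal vertex cover of G^π with X_{C'} > X_C in the induced lexicographic order⟩ : X_C equals the ideal generated by the variables {x_a : a ∈ ⋃_{i=1}^t (N_{G^π}(v_i) \ C)}. -/

import Mathlib

open scoped Classical

namespace PaperHS

/-- A set of vertices is a vertex cover of a simple graph if it meets every edge. -/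
def IsVertexCover {U : Type*} (H : SimpleGraph U) (C : Set U) : Prop :=
  ∀ ⦃a b : U⦄, H.Adj a b → a ∈ C ∨ b ∈ C

/-- A vertex cover is minimal if no proper subset is a vertex cover. -/
def IsMinVertexCover {U : Type*} (H : SimpleGraph U) (C : Set U) : Prop :=
  IsVertexCover H C ∧ ∀ D : Set U, D ⊂ C → ¬ IsVertexCover H D

/-- The clique-whiskered graph `G^π`. -/
def cliqueWhisker {V ι : Type*} (G : SimpleGraph V) (A : ι → Set V) :
    SimpleGraph (V ⊕ ι) :=
  SimpleGraph.fromRel (fun x y =>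
    match x, y with
    | Sum.inl a, Sum.inl b => G.Adj a b
    | Sum.inl a, Sum.inr i => a ∈ A i
    | _, _ => False)

/-- `lexGT lt C D` says the squarefree monomial `X_C` is strictly greater than
`X_D` in the lexicographic order induced by the variable order in which `x` is a
bigger variable than `y` whenever `lt y x`. -/
def lexGT {U : Type*} (lt : U → U → Prop) (C D : Finset U) : Prop :=
  ∃ z ∈ C, z ∉ D ∧ ∀ y : U, lt z y → (y ∈ C ↔ y ∈ D)

/-!
Let `P` be the ideal generated by the variables `x_a`, `a ∈ V \ C`; as every vertex of `G` lies
in some `A_i`, these are the variables of the right-hand side. `P` is prime and contains no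
variable of `X_C`, so `P : X_C = P`. A minimal cover `D` with `X_D > X_C` first differs from `C`
at a vertex of `G`: a whisker `v_i ∈ D \ C` would force `A_i ⊆ C`, hence `A_i ⊆ D` (its
vertices are larger than `v_i`), making `v_i` redundant in `D`. So `X_D ∈ P`. Conversely, for
`a ∈ A_i \ C` we have `v_i ∈ C`, and swapping `v_i` for `a` gives a minimal cover `D` with
`X_D > X_C` and `x_a X_C = x_{v_i} X_D`.
-/

section VertexCover

variable {U : Type*} {H : SimpleGraph U} {C : Set U}

theorem isMinVertexCover_iff :
    IsMinVertexCover H C ↔ IsVertexCover H C ∧ ∀ c ∈ C, ∃ u, H.Adj c u ∧ u ∉ C := by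
  refine ⟨fun hC => ⟨hC.1, fun c hc => ?_⟩,
    fun ⟨hC, hout⟩ => ⟨hC, fun D hD hDcov => ?_⟩⟩
  · by_contra! hN
    refine hC.2 (C \ {c}) (Set.sdiff_singleton_ssubset.mpr hc) fun a b hab => ?_
    rcases hC.1 hab with ha | hb
    · by_cases hac : a = c
      · subst hac
        exact Or.inr ⟨hN b hab, hab.ne.symm⟩
      · exact Or.inl ⟨ha, hac⟩
    · by_cases hbc : b = c
      · subst hbc
        exact Or.inl ⟨hN a hab.symm, hab.ne⟩
      · exact Or.inr ⟨hb, hbc⟩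
  · obtain ⟨c, hcC, hcD⟩ := Set.exists_of_ssubset hD
    obtain ⟨u, hcu, huC⟩ := hout c hcC
    exact (hDcov hcu).elim hcD fun hu => huC (hD.subset hu)

end VertexCover

section CliqueWhisker

variable {V ι : Type*} {G : SimpleGraph V} {A : ι → Set V}

@[simp]
theorem cliqueWhisker_adj_inl_inl {a b : V} :
    (cliqueWhisker G A).Adj (Sum.inl a) (Sum.inl b) ↔ G.Adj a b := by
  simp only [cliqueWhisker, SimpleGraph.fromRel_adj, ne_eq, Sum.inl.injEq]
  exact ⟨fun h => h.2.elim id fun h => h.symm, fun h => ⟨h.ne, Or.inl h⟩⟩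

@[simp]
theorem cliqueWhisker_adj_inl_inr {a : V} {i : ι} :
    (cliqueWhisker G A).Adj (Sum.inl a) (Sum.inr i) ↔ a ∈ A i := by
  simp [cliqueWhisker]

@[simp]
theorem cliqueWhisker_adj_inr_inl {a : V} {i : ι} :
    (cliqueWhisker G A).Adj (Sum.inr i) (Sum.inl a) ↔ a ∈ A i := by
  rw [SimpleGraph.adj_comm, cliqueWhisker_adj_inl_inr]

@[simp]
theorem cliqueWhisker_not_adj_inr_inr {i j : ι} :
    ¬ (cliqueWhisker G A).Adj (Sum.inr i) (Sum.inr j) := by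
  simp [cliqueWhisker]

theorem cliqueWhisker_adj_inr {i : ι} {y : V ⊕ ι} :
    (cliqueWhisker G A).Adj (Sum.inr i) y ↔ ∃ a ∈ A i, y = Sum.inl a := by
  cases y <;> simp

theorem iUnion_neighborSet_inr_diff (hA : ∀ a, ∃ i, a ∈ A i) (C : Set (V ⊕ ι)) :
    ⋃ i, (cliqueWhisker G A).neighborSet (Sum.inr i) \ C = Set.range Sum.inl \ C := by
  ext x
  simp only [Set.mem_iUnion, Set.mem_sdiff, SimpleGraph.mem_neighborSet, cliqueWhisker_adj_inr,
    Set.mem_range]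
  constructor
  · rintro ⟨i, ⟨a, -, rfl⟩, hx⟩
    exact ⟨⟨a, rfl⟩, hx⟩
  · rintro ⟨⟨a, rfl⟩, hx⟩
    obtain ⟨i, hi⟩ := hA a
    exact ⟨i, ⟨a, hi, rfl⟩, hx⟩

def closedBlock (A : ι → Set V) (i : ι) : Set (V ⊕ ι) :=
  insert (Sum.inr i) (Sum.inl '' A i)

@[simp]
theorem inl_mem_closedBlock {a : V} {i : ι} : Sum.inl a ∈ closedBlock A i ↔ a ∈ A i := by
  simp [closedBlock]

@[simp]
theorem inr_mem_closedBlock {i j : ι} : Sum.inr j ∈ closedBlock A i ↔ j = i := by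
  simp [closedBlock]

theorem isClique_closedBlock {i : ι} (hclique : G.IsClique (A i)) :
    (cliqueWhisker G A).IsClique (closedBlock A i) := by
  rintro (a | j) hx (b | k) hy hxy <;>
    simp only [inl_mem_closedBlock, inr_mem_closedBlock] at hx hy
  · simpa using hclique hx hy (by simpa using hxy)
  · simpa [hy] using hx
  · simpa [hx] using hy
  · exact absurd (hx.trans hy.symm) (by simpa using hxy)

theorem IsMinVertexCover.not_closedBlock_subset {C : Set (V ⊕ ι)}
    (hC : IsMinVertexCover (cliqueWhisker G A) C) (i : ι) : ¬ closedBlock A i ⊆ C := by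
  intro hsub
  obtain ⟨u, hiu, huC⟩ := (isMinVertexCover_iff.mp hC).2 _ (hsub (inr_mem_closedBlock.mpr rfl))
  obtain ⟨a, ha, rfl⟩ := cliqueWhisker_adj_inr.mp hiu
  exact huC (hsub (inl_mem_closedBlock.mpr ha))

/-- The blocks are cliques covering all vertices, so every vertex of `C` is adjacent to a vertex
`C` misses in its block. -/
theorem isMinVertexCover_of_not_closedBlock_subset (hA : ∀ a, ∃ i, a ∈ A i)
    (hclique : ∀ i, G.IsClique (A i)) {C : Set (V ⊕ ι)}
    (hC : IsVertexCover (cliqueWhisker G A) C) (hblock : ∀ i, ¬ closedBlock A i ⊆ C) :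
    IsMinVertexCover (cliqueWhisker G A) C := by
  refine isMinVertexCover_iff.mpr ⟨hC, fun c hc => ?_⟩
  obtain ⟨i, hci⟩ : ∃ i, c ∈ closedBlock A i := by
    rcases c with a | i
    · simpa using hA a
    · exact ⟨i, by simp⟩
  obtain ⟨u, hu, huC⟩ := Set.not_subset.mp (hblock i)
  exact ⟨u, isClique_closedBlock (hclique i) hci hu (ne_of_mem_of_not_mem hc huC), huC⟩

theorem IsVertexCover.inr_mem_of_inl_not_mem {C : Set (V ⊕ ι)}
    (hC : IsVertexCover (cliqueWhisker G A) C)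
    {a : V} {i : ι} (ha : a ∈ A i) (haC : Sum.inl a ∉ C) : Sum.inr i ∈ C :=
  (hC (cliqueWhisker_adj_inl_inr.mpr ha)).resolve_left haC

theorem IsVertexCover.inl_mem_of_inr_not_mem {C : Set (V ⊕ ι)}
    (hC : IsVertexCover (cliqueWhisker G A) C)
    {a : V} {i : ι} (ha : a ∈ A i) (hiC : Sum.inr i ∉ C) : Sum.inl a ∈ C :=
  (hC (cliqueWhisker_adj_inl_inr.mpr ha)).resolve_right hiC

theorem IsMinVertexCover.exchange (hA : ∀ a, ∃! i, a ∈ A i)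
    (hclique : ∀ i, G.IsClique (A i))
    {C : Set (V ⊕ ι)} (hC : IsMinVertexCover (cliqueWhisker G A) C) {a : V} {i : ι}
    (hai : a ∈ A i) (haC : Sum.inl a ∉ C) :
    IsMinVertexCover (cliqueWhisker G A) (insert (Sum.inl a) (C \ {Sum.inr i})) := by
  set D := insert (Sum.inl a) (C \ {Sum.inr i})
  have hcover : ∀ x y, (cliqueWhisker G A).Adj x y → x ∈ C → x ∈ D ∨ y ∈ D := by
    intro x y hxy hx
    by_cases hxi : x = Sum.inr i
    · subst hxi
      obtain ⟨b, hb, rfl⟩ := cliqueWhisker_adj_inr.mp hxy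
      by_cases hba : b = a
      · exact Or.inr (by simp [D, hba])
      · have hbC : Sum.inl b ∈ C :=
          (hC.1 (cliqueWhisker_adj_inl_inl.mpr (hclique i hai hb (Ne.symm hba)))).resolve_left haC
        exact Or.inr (Or.inr ⟨hbC, by simp⟩)
    · exact Or.inl (Or.inr ⟨hx, hxi⟩)
  refine isMinVertexCover_of_not_closedBlock_subset (fun b => (hA b).exists) hclique
    (fun x y hxy => (hC.1 hxy).elim (hcover x y hxy) fun hy => (hcover y x hxy.symm hy).symm)
    fun j hsub => ?_
  by_cases hji : j = i
  · subst hji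
    simpa [D] using hsub (inr_mem_closedBlock.mpr rfl)
  · obtain ⟨u, hu, huC⟩ := Set.not_subset.mp (hC.not_closedBlock_subset j)
    rcases hsub hu with rfl | ⟨huC', -⟩
    · exact hji ((hA a).unique (inl_mem_closedBlock.mp hu) hai)
    · exact huC huC'

theorem IsMinVertexCover.exists_inl_mem_sdiff_of_lexGT {lt : V ⊕ ι → V ⊕ ι → Prop}
    (hblock : ∀ i, ∀ a ∈ A i, lt (Sum.inr i) (Sum.inl a)) {C D : Finset (V ⊕ ι)}
    (hC : IsVertexCover (cliqueWhisker G A) ↑C) (hD : IsMinVertexCover (cliqueWhisker G A) ↑D)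
    (hDC : lexGT lt D C) : ∃ a, Sum.inl a ∈ D ∧ Sum.inl a ∉ C := by
  obtain ⟨z, hzD, hzC, hz⟩ := hDC
  rcases z with a | i
  · exact ⟨a, hzD, hzC⟩
  · obtain ⟨u, hiu, huD⟩ := (isMinVertexCover_iff.mp hD).2 _ hzD
    obtain ⟨b, hb, rfl⟩ := cliqueWhisker_adj_inr.mp hiu
    exact absurd ((hz _ (hblock i b hb)).mpr (hC.inl_mem_of_inr_not_mem hb hzC)) huD

end CliqueWhisker

theorem lexGT_insert_erase {U : Type*} [DecidableEq U] {lt : U → U → Prop} [IsStrictOrder U lt]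
    {C : Finset U} {x y : U} (hx : x ∉ C) (hyx : lt y x) :
    lexGT lt (insert x (C.erase y)) C := by
  refine ⟨x, Finset.mem_insert_self _ _, hx, fun z hxz => ?_⟩
  have hzx : z ≠ x := fun h => irrefl x (h ▸ hxz)
  have hzy : z ≠ y := fun h => asymm hyx (h ▸ hxz)
  simp [hzx, hzy]

section VariableIdeal

open MvPolynomial

variable {σ R : Type*} [CommSemiring R] {s : Set σ}

theorem mul_X_mem_span_X_image_iff {j : σ} (hj : j ∉ s) {p : MvPolynomial σ R} :
    p * X j ∈ Ideal.span (X '' s) ↔ p ∈ Ideal.span (X '' s) := by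
  simp only [mem_ideal_span_X_image, support_mul_X, Finset.mem_map, addRightEmbedding_apply]
  refine ⟨fun h m hm => ?_, ?_⟩
  · obtain ⟨i, hi, hmi⟩ := h _ ⟨m, hm, rfl⟩
    exact ⟨i, hi, by simpa [Finsupp.single_apply, ne_of_mem_of_not_mem hi hj |>.symm] using hmi⟩
  · rintro h _ ⟨m, hm, rfl⟩
    obtain ⟨i, hi, hmi⟩ := h m hm
    exact ⟨i, hi, by simp [hmi]⟩

theorem mul_prod_X_mem_span_X_image_iff {t : Finset σ} (ht : ∀ j ∈ t, j ∉ s)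
    {p : MvPolynomial σ R} :
    p * ∏ j ∈ t, X j ∈ Ideal.span (X '' s) ↔ p ∈ Ideal.span (X '' s) := by
  induction t using Finset.induction_on generalizing p with
  | empty => simp
  | insert j t hjt ih =>
    rw [Finset.prod_insert hjt, ← mul_assoc, ih fun k hk => ht k (Finset.mem_insert_of_mem hk),
      mul_X_mem_span_X_image_iff (ht j (Finset.mem_insert_self j t))]

theorem prod_X_mem_span_X_image {t : Finset σ} {j : σ} (hjt : j ∈ t) (hjs : j ∈ s) :
    ∏ i ∈ t, X i ∈ Ideal.span (X '' s : Set (MvPolynomial σ R)) :=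
  Ideal.mem_of_dvd _ (Finset.dvd_prod_of_mem _ hjt) (Ideal.subset_span ⟨j, hjs, rfl⟩)

end VariableIdeal

theorem statement3_general {V ι K : Type*} [Field K]
    (G : SimpleGraph V) (A : ι → Set V)
    (hA : ∀ a : V, ∃! i, a ∈ A i)
    (hclique : ∀ i, G.IsClique (A i))
    (lt : (V ⊕ ι) → (V ⊕ ι) → Prop)
    (hlt : IsStrictTotalOrder (V ⊕ ι) lt)
    (hblock : ∀ i : ι, ∀ a ∈ A i, lt (Sum.inr i) (Sum.inl a))
    (C : Finset (V ⊕ ι)) (hC : IsMinVertexCover (cliqueWhisker G A) ↑C) :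
    (Ideal.span { m : MvPolynomial (V ⊕ ι) K | ∃ D : Finset (V ⊕ ι),
          IsMinVertexCover (cliqueWhisker G A) ↑D ∧ lexGT lt D C ∧
          m = ∏ x ∈ D, MvPolynomial.X x }).colon
        ((Ideal.span {∏ x ∈ C, (MvPolynomial.X x : MvPolynomial (V ⊕ ι) K)} :
          Ideal (MvPolynomial (V ⊕ ι) K)) : Set (MvPolynomial (V ⊕ ι) K))
      = Ideal.span (MvPolynomial.X ''
          (⋃ i : ι, ((cliqueWhisker G A).neighborSet (Sum.inr i) \ ↑C))) := by
  rw [iUnion_neighborSet_inr_diff fun a => (hA a).exists]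
  refine le_antisymm (fun f hf => ?_) (Ideal.span_le.mpr ?_)
  · rw [Submodule.mem_colon_span_singleton, smul_eq_mul] at hf
    refine (mul_prod_X_mem_span_X_image_iff (fun j hj hjs => hjs.2 hj)).mp
      (Ideal.span_le.mpr ?_ hf)
    rintro _ ⟨D, hD, hDC, rfl⟩
    obtain ⟨a, haD, haC⟩ := hD.exists_inl_mem_sdiff_of_lexGT hblock hC.1 hDC
    exact prod_X_mem_span_X_image haD ⟨⟨a, rfl⟩, haC⟩
  · rintro _ ⟨_, ⟨⟨a, rfl⟩, haC⟩, rfl⟩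
    obtain ⟨i, hai, -⟩ := hA a
    have hiC : Sum.inr i ∈ C := hC.1.inr_mem_of_inl_not_mem hai haC
    have hprod : MvPolynomial.X (Sum.inl a) * ∏ x ∈ C, MvPolynomial.X x =
        (∏ x ∈ insert (Sum.inl a) (C.erase (Sum.inr i)), MvPolynomial.X x) *
          (MvPolynomial.X (Sum.inr i) : MvPolynomial (V ⊕ ι) K) := by
      rw [Finset.prod_insert fun h => haC (Finset.mem_of_mem_erase h),
        ← Finset.prod_erase_mul C _ hiC]
      ring
    rw [SetLike.mem_coe, Submodule.mem_colon_span_singleton, smul_eq_mul, hprod]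
    refine Ideal.mul_mem_right _ _
      (Ideal.subset_span ⟨_, ?_, lexGT_insert_erase haC (hblock i a hai), rfl⟩)
    simpa using hC.exchange hA hclique hai haC

theorem statement3 {V ι K : Type*} [Fintype V] [Fintype ι] [Field K]
    (G : SimpleGraph V) (A : ι → Set V)
    (hA : ∀ a : V, ∃! i, a ∈ A i)
    (hclique : ∀ i, G.IsClique (A i))
    (lt : (V ⊕ ι) → (V ⊕ ι) → Prop)
    (hlt : IsStrictTotalOrder (V ⊕ ι) lt)
    (hblock : ∀ i : ι, ∀ a ∈ A i, lt (Sum.inr i) (Sum.inl a))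
    (hblocks1 : ∀ i j : ι, i ≠ j → ∀ a ∈ A i, ∀ b ∈ A j,
      (lt (Sum.inl a) (Sum.inl b) ↔ lt (Sum.inr i) (Sum.inr j)))
    (hblocks2 : ∀ i j : ι, i ≠ j → ∀ a ∈ A i,
      (lt (Sum.inl a) (Sum.inr j) ↔ lt (Sum.inr i) (Sum.inr j)))
    (C : Finset (V ⊕ ι)) (hC : IsMinVertexCover (cliqueWhisker G A) ↑C) :
    (Ideal.span { m : MvPolynomial (V ⊕ ι) K | ∃ D : Finset (V ⊕ ι),
          IsMinVertexCover (cliqueWhisker G A) ↑D ∧ lexGT lt D C ∧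
          m = ∏ x ∈ D, MvPolynomial.X x }).colon
        ((Ideal.span {∏ x ∈ C, (MvPolynomial.X x : MvPolynomial (V ⊕ ι) K)} :
          Ideal (MvPolynomial (V ⊕ ι) K)) : Set (MvPolynomial (V ⊕ ι) K))
      = Ideal.span (MvPolynomial.X ''
          (⋃ i : ι, ((cliqueWhisker G A).neighborSet (Sum.inr i) \ ↑C))) :=
  statement3_general G A hA hclique lt hlt hblock C hC

end PaperHS
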